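/- Let N ≥ 1 and let Z be an N²-dimensional standard Gaussian vector with S = Σ_{k=1}^{N²} Z_k, and let c ~ N(0,1) be independent of Z. Define subpixels X_k = c/N² + (1/N)(Z_k - S/N²). Then the vector (X_1, ..., X_{N²}) is distributed as an N²-dimensional Gaussian with i.i.d. N(0, 1/N²) entries. -/

import Mathlib

/-!
With `u = (1, …, 1) / N`, a unit vector of `ℝ^{N²}`, the subpixels are `N • X = Z - ⟪u, Z⟫ u + c u`:
upsampling replaces the component of the standard Gaussian vector `Z` along `u` by the independent
standard Gaussian `c`. By independence, the characteristic function of the result at `t` is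
`exp (-‖t - ⟪u, t⟫ u‖² / 2) · exp (-⟪u, t⟫² / 2) = exp (-‖t‖² / 2)` (Pythagoras), so `N • X` is
again standard Gaussian.
-/

open MeasureTheory ProbabilityTheory
open scoped RealInnerProductSpace

section Resample

variable {E : Type*} [NormedAddCommGroup E] [InnerProductSpace ℝ E]

lemma norm_sub_inner_smul_sq_add_inner_sq {u : E} (hu : ‖u‖ = 1) (t : E) :
    ‖t - ⟪u, t⟫ • u‖ ^ 2 + ⟪u, t⟫ ^ 2 = ‖t‖ ^ 2 := by
  rw [norm_sub_sq_real, norm_smul, real_inner_smul_right, real_inner_comm, Real.norm_eq_abs, hu]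
  ring_nf
  rw [sq_abs]
  ring

variable [MeasurableSpace E] [BorelSpace E]

lemma charFun_map_sub_inner_smul (ν : Measure E) (u t : E) :
    charFun (ν.map fun z ↦ z - ⟪u, z⟫ • u) t = charFun ν (t - ⟪u, t⟫ • u) := by
  rw [charFun_apply, charFun_apply,
    integral_map (by fun_prop : Continuous _).aemeasurable (by fun_prop)]
  congr with z
  simp only [inner_sub_left, inner_sub_right, real_inner_smul_left, real_inner_smul_right,
    real_inner_comm u]
  ring_nf

lemma charFun_map_smul_const (ν : Measure ℝ) (u t : E) :
    charFun (ν.map (· • u)) t = charFun ν ⟪u, t⟫ := by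
  rw [charFun_apply, charFun_apply_real, integral_map (by fun_prop) (by fun_prop)]
  simp only [real_inner_smul_left, mul_comm, Complex.ofReal_mul]

variable [FiniteDimensional ℝ E] {Ω : Type*} {mΩ : MeasurableSpace Ω} {P : Measure Ω}
  [IsProbabilityMeasure P]

theorem hasLaw_stdGaussian_resample {Z : Ω → E} {c : Ω → ℝ} (hZ : HasLaw Z (stdGaussian E) P)
    (hc : HasLaw c (gaussianReal 0 1) P) (hZc : IndepFun Z c P) {u : E} (hu : ‖u‖ = 1) :
    HasLaw (fun ω ↦ Z ω - ⟪u, Z ω⟫ • u + c ω • u) (stdGaussian E) P where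
  aemeasurable := by have := hZ.aemeasurable; have := hc.aemeasurable; fun_prop
  map_eq := by
    have hZ' : AEMeasurable Z P := hZ.aemeasurable
    have hc' : AEMeasurable c P := hc.aemeasurable
    have hindep : IndepFun (fun ω ↦ Z ω - ⟪u, Z ω⟫ • u) (fun ω ↦ c ω • u) P :=
      hZc.comp (φ := fun z ↦ z - ⟪u, z⟫ • u) (ψ := (· • u)) (by fun_prop) (by fun_prop)
    have hlawZ : P.map (fun ω ↦ Z ω - ⟪u, Z ω⟫ • u)
        = (stdGaussian E).map (fun z ↦ z - ⟪u, z⟫ • u) := by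
      rw [← hZ.map_eq, AEMeasurable.map_map_of_aemeasurable (by fun_prop) hZ']
      rfl
    have hlawc : P.map (fun ω ↦ c ω • u) = (gaussianReal 0 1).map (· • u) := by
      rw [← hc.map_eq, AEMeasurable.map_map_of_aemeasurable (by fun_prop) hc']
      rfl
    refine Measure.ext_of_charFun (funext fun t ↦ ?_)
    rw [hindep.charFun_map_fun_add_eq_mul (by fun_prop) (by fun_prop), Pi.mul_apply, hlawZ, hlawc,
      charFun_map_sub_inner_smul, charFun_map_smul_const, charFun_stdGaussian,
      charFun_stdGaussian, charFun_gaussianReal, ← Complex.exp_add]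
    have hpyth := congrArg ((↑) : ℝ → ℂ) (norm_sub_inner_smul_sq_add_inner_sq hu t)
    push_cast at hpyth ⊢
    congr 1
    linear_combination (-1 / 2 : ℂ) * hpyth

end Resample

section EuclideanSpace

variable {ι : Type*} [Fintype ι]

lemma EuclideanSpace.norm_toLp_const (a : ℝ) :
    ‖(WithLp.toLp 2 fun _ : ι ↦ a : EuclideanSpace ℝ ι)‖ = √(Fintype.card ι) * |a| := by
  rw [EuclideanSpace.norm_eq]
  simp [Real.sqrt_mul (Nat.cast_nonneg _), Real.sqrt_sq_eq_abs]

lemma hasLaw_const_mul_stdGaussian (a : ℝ) :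
    HasLaw (fun (y : EuclideanSpace ℝ ι) i ↦ a * y i)
      (Measure.pi fun _ ↦ gaussianReal 0 (a ^ 2).toNNReal) (stdGaussian (EuclideanSpace ℝ ι)) where
  map_eq := by
    rw [← map_pi_eq_stdGaussian, Measure.map_map (by fun_prop) (by fun_prop), Function.comp_def,
      Measure.pi_map_pi fun _ ↦ (measurable_const_mul a).aemeasurable]
    simp_rw [gaussianReal_map_const_mul, mul_zero, mul_one,
      Real.toNNReal_of_nonneg (sq_nonneg a)]

end EuclideanSpace

/-- For `N ≥ 1`, let `Z` be an `N²`-dimensional standard Gaussian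
vector with `S = Σ Z_k`, and `c ~ N(0,1)` independent of `Z`. Then the subpixels
`X_k = c/N² + (1/N)(Z_k - S/N²)` form an `N²`-dimensional Gaussian vector with
i.i.d. `N(0, 1/N²)` entries, i.e. the joint law is the product of `N²` copies of
`gaussianReal 0 (1/N²)`. -/
theorem upsampled_subpixels_are_white_noise
    {Ω : Type*} [MeasurableSpace Ω] (μ : Measure Ω) [IsProbabilityMeasure μ]
    (N : ℕ) (hN : 1 ≤ N)
    (Z : Fin (N ^ 2) → Ω → ℝ) (hZmeas : ∀ k, Measurable (Z k))
    (hZindep : iIndepFun Z μ)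
    (hZgauss : ∀ k, μ.map (Z k) = gaussianReal 0 1)
    (c : Ω → ℝ) (hcmeas : Measurable c) (hc : μ.map c = gaussianReal 0 1)
    (hcZ : IndepFun c (fun ω => fun k : Fin (N ^ 2) => Z k ω) μ)
    (X : Fin (N ^ 2) → Ω → ℝ)
    (hX : ∀ k ω, X k ω =
      c ω / (N ^ 2 : ℝ) + (1 / (N : ℝ)) * (Z k ω - (∑ j, Z j ω) / (N ^ 2 : ℝ))) :
    μ.map (fun ω => fun k : Fin (N ^ 2) => X k ω)
      = Measure.pi (fun _ : Fin (N ^ 2) =>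
          gaussianReal 0 ((1 / (N : ℝ) ^ 2).toNNReal)) := by
  set u : EuclideanSpace ℝ (Fin (N ^ 2)) := WithLp.toLp 2 fun _ ↦ (N : ℝ)⁻¹
  have hu : ‖u‖ = 1 := by
    simp [u, EuclideanSpace.norm_toLp_const]
    field_simp
  have hZ : HasLaw (fun ω ↦ WithLp.toLp 2 fun k ↦ Z k ω)
      (stdGaussian (EuclideanSpace ℝ (Fin (N ^ 2)))) μ :=
    HasLaw.fun_comp ⟨by fun_prop, map_pi_eq_stdGaussian⟩
      (hZindep.hasLaw_pi fun k ↦ ⟨(hZmeas k).aemeasurable, hZgauss k⟩)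
  have hY := hasLaw_stdGaussian_resample hZ ⟨hcmeas.aemeasurable, hc⟩
    (hcZ.symm.comp (φ := WithLp.toLp 2) (ψ := id) (by fun_prop) measurable_id) hu
  have hXY : (fun ω k ↦ X k ω) = fun ω k ↦ (N : ℝ)⁻¹ *
      ((WithLp.toLp 2 fun k ↦ Z k ω) - ⟪u, WithLp.toLp 2 fun k ↦ Z k ω⟫ • u + c ω • u) k := by
    ext ω k
    simp [hX, u, PiLp.inner_apply, ← Finset.sum_mul]
    field_simp
    ring
  rw [hXY, ((hasLaw_const_mul_stdGaussian _).fun_comp hY).map_eq, one_div, inv_pow]
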